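/- arXiv:1510.08800 — 7 statements merged into one kernel-verified Lean document; each statement's English description precedes it below -/
import Mathlib

section
/- For any local hidden variable model, i.e., any correlations of the form P(ab|xy) = Σ_λ p_λ P_λ(a|x) P_λ(b|y) with a,b ∈ {-1,+1}, x,y ∈ {0,1}, p_λ ≥ 0, Σ_λ p_λ = 1, the CHSH expression ⟨A₀B₀⟩ + ⟨A₀B₁⟩ + ⟨A₁B₀⟩ − ⟨A₁B₁⟩ is at most 2. -/
/-- Sign of an outcome labeled by `Fin 2`: outcome `0` ↦ `+1`, outcome `1` ↦ `-1`. -/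
def sgn (a : Fin 2) : ℝ := if a = 0 then 1 else -1

/-- CHSH bound for local hidden variable models. -/
theorem chsh_lhv_bound
    {ι : Type*} [Fintype ι]
    (p : ι → ℝ) (PA PB : ι → Fin 2 → Fin 2 → ℝ)
    (P : Fin 2 → Fin 2 → Fin 2 → Fin 2 → ℝ)
    (E : Fin 2 → Fin 2 → ℝ)
    (hp : ∀ l, 0 ≤ p l) (hpsum : ∑ l, p l = 1)
    (hPA : ∀ l a x, 0 ≤ PA l a x) (hPAsum : ∀ l x, ∑ a, PA l a x = 1)
    (hPB : ∀ l b y, 0 ≤ PB l b y) (hPBsum : ∀ l y, ∑ b, PB l b y = 1)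
    (hmodel : ∀ a b x y, P a b x y = ∑ l, p l * PA l a x * PB l b y)
    (hE : ∀ x y, E x y = ∑ a, ∑ b, sgn a * sgn b * P a b x y) :
    E 0 0 + E 0 1 + E 1 0 - E 1 1 ≤ 2 := by
  set A : ι → Fin 2 → ℝ := fun l x => PA l 0 x - PA l 1 x with hA
  set B : ι → Fin 2 → ℝ := fun l y => PB l 0 y - PB l 1 y with hB
  have hAle : ∀ l x, |A l x| ≤ 1 := by
    intro l x
    have h := hPAsum l x
    simp [Fin.sum_univ_two] at h
    rw [abs_le]
    constructor <;> simp [hA] <;>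
      nlinarith [hPA l 0 x, hPA l 1 x]
  have hBle : ∀ l y, |B l y| ≤ 1 := by
    intro l y
    have h := hPBsum l y
    simp [Fin.sum_univ_two] at h
    rw [abs_le]
    constructor <;> simp [hB] <;>
      nlinarith [hPB l 0 y, hPB l 1 y]
  have hEeq : ∀ x y, E x y = ∑ l, p l * A l x * B l y := by
    intro x y
    rw [hE x y]
    simp only [hmodel, Fin.sum_univ_two, sgn]
    norm_num
    rw [← Finset.sum_neg_distrib, ← Finset.sum_neg_distrib,
      ← Finset.sum_add_distrib, ← Finset.sum_add_distrib, ← Finset.sum_add_distrib]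
    apply Finset.sum_congr rfl
    intro l _
    simp only [hA, hB]
    ring
  rw [hEeq, hEeq, hEeq, hEeq]
  rw [← Finset.sum_add_distrib, ← Finset.sum_add_distrib, ← Finset.sum_sub_distrib]
  calc (∑ l, (p l * A l 0 * B l 0 + p l * A l 0 * B l 1 + p l * A l 1 * B l 0 - p l * A l 1 * B l 1))
      ≤ ∑ l, 2 * p l := by
        apply Finset.sum_le_sum
        intro l _
        have ha0 := abs_le.mp (hAle l 0)
        have ha1 := abs_le.mp (hAle l 1)
        have hb0 := abs_le.mp (hBle l 0)
        have hb1 := abs_le.mp (hBle l 1)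
        have ht : A l 0 * B l 0 + A l 0 * B l 1 + A l 1 * B l 0 - A l 1 * B l 1 ≤ 2 := by
          rcases le_total 0 (B l 0 + B l 1) with h1 | h1 <;>
            rcases le_total 0 (B l 0 - B l 1) with h2 | h2 <;>
            nlinarith [ha0.1, ha0.2, ha1.1, ha1.2, hb0.1, hb0.2, hb1.1, hb1.2]
        nlinarith [mul_le_mul_of_nonneg_left ht (hp l)]
    _ = 2 := by rw [← Finset.mul_sum, hpsum, mul_one]
end

section
/- For any quantum state ρ on ℂ² ⊗ ℂ² and any observables A₀, A₁, B₀, B₁ with eigenvalues in [-1,1] (Hermitian operators with operator norm ≤ 1), the expectation Tr(ρ (A₀⊗B₀ + A₀⊗B₁ + A₁⊗B₀ − A₁⊗B₁)) is at most 2√2 (Tsirelson's bound). -/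
open Matrix Kronecker
open scoped ComplexOrder

/-! For commuting families `a₀, a₁` and `b₀, b₁` of self-adjoint elements between `-1` and `1`,
the CHSH operator `S = a₀b₀ + a₀b₁ + a₁b₀ - a₁b₁` has the sum-of-squares decomposition
`2√2 (2√2 - S) = (√2 a₀ - b₀ - b₁)² + (√2 a₁ - b₀ + b₁)² + 2 ∑ (1 - x²)`,
and `1 - x² ≥ 0` because `2 (1 - x²) = (1 - x)(1 + x)(1 - x) + (1 + x)(1 - x)(1 + x)`.
So `S ≤ 2√2` as operators, and pairing with a density matrix bounds its expectation.
On `ℂ² ⊗ ℂ²` the families are `Aₓ ⊗ 1` and `1 ⊗ B_y`. -/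

namespace Matrix

section Kronecker

variable {α l m n p : Type*}

lemma sub_kronecker [Ring α] (A₁ A₂ : Matrix l m α) (B : Matrix n p α) :
    (A₁ - A₂) ⊗ₖ B = A₁ ⊗ₖ B - A₂ ⊗ₖ B := by
  ext; simp [sub_mul]

lemma kronecker_sub [Ring α] (A : Matrix l m α) (B₁ B₂ : Matrix n p α) :
    A ⊗ₖ (B₁ - B₂) = A ⊗ₖ B₁ - A ⊗ₖ B₂ := by
  ext; simp [mul_sub]

lemma neg_kronecker [Ring α] (A : Matrix l m α) (B : Matrix n p α) : (-A) ⊗ₖ B = -(A ⊗ₖ B) := by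
  ext; simp

lemma kronecker_neg [Ring α] (A : Matrix l m α) (B : Matrix n p α) : A ⊗ₖ (-B) = -(A ⊗ₖ B) := by
  ext; simp

lemma kronecker_one_mul_one_kronecker [CommSemiring α] [Fintype m] [Fintype n] [DecidableEq m]
    [DecidableEq n] (A : Matrix l m α) (B : Matrix n p α) :
    (A ⊗ₖ (1 : Matrix n n α)) * ((1 : Matrix m m α) ⊗ₖ B) = A ⊗ₖ B := by
  rw [← mul_kronecker_mul, Matrix.mul_one, Matrix.one_mul]

lemma one_kronecker_mul_kronecker_one [CommSemiring α] [Fintype m] [Fintype n] [DecidableEq m]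
    [DecidableEq n] (A : Matrix m m α) (B : Matrix n n α) :
    ((1 : Matrix m m α) ⊗ₖ B) * (A ⊗ₖ (1 : Matrix n n α)) = A ⊗ₖ B := by
  rw [← mul_kronecker_mul, Matrix.mul_one, Matrix.one_mul]

end Kronecker

variable {𝕜 m n : Type*} [RCLike 𝕜] [Fintype m] [Fintype n]

open scoped MatrixOrder

lemma kronecker_le_kronecker_of_nonneg_right {X Y : Matrix m m 𝕜} {C : Matrix n n 𝕜}
    (h : X ≤ Y) (hC : 0 ≤ C) : X ⊗ₖ C ≤ Y ⊗ₖ C := by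
  rw [le_iff, ← sub_kronecker]
  exact (le_iff.mp h).kronecker hC.posSemidef

lemma kronecker_le_kronecker_of_nonneg_left {X Y : Matrix n n 𝕜} {C : Matrix m m 𝕜}
    (h : X ≤ Y) (hC : 0 ≤ C) : C ⊗ₖ X ≤ C ⊗ₖ Y := by
  rw [le_iff, ← kronecker_sub]
  exact hC.posSemidef.kronecker (le_iff.mp h)

lemma kronecker_one_mem_Icc [DecidableEq m] [DecidableEq n] {X : Matrix m m 𝕜}
    (hX : X ∈ Set.Icc (-1) 1) :
    X ⊗ₖ (1 : Matrix n n 𝕜) ∈ Set.Icc (-1) 1 := by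
  have h {Y Z : Matrix m m 𝕜} (hYZ : Y ≤ Z) : Y ⊗ₖ (1 : Matrix n n 𝕜) ≤ Z ⊗ₖ 1 :=
    kronecker_le_kronecker_of_nonneg_right hYZ PosSemidef.one.nonneg
  simpa only [Set.mem_Icc, neg_kronecker, one_kronecker_one] using And.imp h h hX

lemma one_kronecker_mem_Icc [DecidableEq m] [DecidableEq n] {X : Matrix n n 𝕜}
    (hX : X ∈ Set.Icc (-1) 1) :
    (1 : Matrix m m 𝕜) ⊗ₖ X ∈ Set.Icc (-1) 1 := by
  have h {Y Z : Matrix n n 𝕜} (hYZ : Y ≤ Z) : (1 : Matrix m m 𝕜) ⊗ₖ Y ≤ 1 ⊗ₖ Z :=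
    kronecker_le_kronecker_of_nonneg_left hYZ PosSemidef.one.nonneg
  simpa only [Set.mem_Icc, kronecker_neg, one_kronecker_one] using And.imp h h hX

lemma PosSemidef.trace_mul_mono [DecidableEq n] {ρ : Matrix n n 𝕜} (hρ : ρ.PosSemidef)
    {X Y : Matrix n n 𝕜} (h : X ≤ Y) : (ρ * X).trace ≤ (ρ * Y).trace := by
  obtain ⟨C, hC⟩ := CStarAlgebra.nonneg_iff_eq_star_mul_self.mp (sub_nonneg.mpr h)
  rw [← sub_nonneg, ← trace_sub, ← mul_sub, hC, star_eq_conjTranspose, ← mul_assoc,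
    trace_mul_cycle]
  exact (hρ.mul_mul_conjTranspose_same C).trace_nonneg

end Matrix

lemma IsSelfAdjoint.of_le_one {R : Type*} [Ring R] [PartialOrder R] [StarRing R]
    [StarOrderedRing R] {a : R} (h : a ≤ 1) : IsSelfAdjoint a := by
  simpa using (IsSelfAdjoint.one (R := R)).sub (IsSelfAdjoint.of_nonneg (sub_nonneg.mpr h))

section CHSH

variable {R : Type*} [Ring R] [Algebra ℝ R]

def chsh (a b : Fin 2 → R) : R := a 0 * b 0 + a 0 * b 1 + a 1 * b 0 - a 1 * b 1

lemma two_mul_smul_sub_chsh_eq (s : ℝ) (hs : s * s = 2) {a b : Fin 2 → R}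
    (hab : ∀ i j, Commute (a i) (b j)) :
    (2 * s) • ((2 * s) • 1 - chsh a b) =
      (s • a 0 - (b 0 + b 1)) * (s • a 0 - (b 0 + b 1)) +
      (s • a 1 - (b 0 - b 1)) * (s • a 1 - (b 0 - b 1)) +
      (2 : ℝ) • ((1 - a 0 * a 0) + (1 - a 1 * a 1) + (1 - b 0 * b 0) + (1 - b 1 * b 1)) := by
  simp only [chsh, sub_mul, mul_sub, add_mul, mul_add, smul_mul_assoc, mul_smul_comm,
    ← (hab _ _).eq]
  linear_combination (norm := module) hs • (4 • (1 : R) - a 0 * a 0 - a 1 * a 1)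

variable [PartialOrder R] [StarRing R] [StarOrderedRing R] [PosSMulMono ℝ R]

lemma mul_self_le_one_of_mem_Icc {a : R} (ha : a ∈ Set.Icc (-1) 1) : a * a ≤ 1 := by
  have hx : 0 ≤ 1 - a := sub_nonneg.mpr ha.2
  have hy : 0 ≤ 1 + a := by simpa [sub_eq_add_neg, add_comm] using sub_nonneg.mpr ha.1
  have key :
      (1 - a) * (1 + a) * (1 - a) + (1 + a) * (1 - a) * (1 + a) = (2 : ℝ) • (1 - a * a) := by
    rw [two_smul]; noncomm_ring
  rw [← sub_nonneg]
  refine nonneg_of_smul_nonneg_of_pos_left ?_ (two_pos : (0 : ℝ) < 2)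
  exact key ▸ add_nonneg (conjugate_nonneg_of_nonneg hy hx) (conjugate_nonneg_of_nonneg hx hy)

variable [StarModule ℝ R]

theorem chsh_le_two_mul_sqrt_two {a b : Fin 2 → R} (hab : ∀ i j, Commute (a i) (b j))
    (ha : ∀ i, a i ∈ Set.Icc (-1) 1) (hb : ∀ j, b j ∈ Set.Icc (-1) 1) :
    chsh a b ≤ (2 * √2) • 1 := by
  have hs : √2 * √2 = 2 := Real.mul_self_sqrt zero_le_two
  have hsa (i : Fin 2) : IsSelfAdjoint (a i) := .of_le_one (ha i).2
  have hsb (j : Fin 2) : IsSelfAdjoint (b j) := .of_le_one (hb j).2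
  have hsq {x : R} (hx : x ∈ Set.Icc (-1) 1) : 0 ≤ 1 - x * x :=
    sub_nonneg.mpr (mul_self_le_one_of_mem_Icc hx)
  rw [← sub_nonneg]
  refine nonneg_of_smul_nonneg_of_pos_left ?_ (by positivity : (0 : ℝ) < 2 * √2)
  rw [two_mul_smul_sub_chsh_eq √2 hs hab]
  refine add_nonneg (add_nonneg ?_ ?_) (smul_nonneg zero_le_two ?_)
  · exact (((IsSelfAdjoint.all √2).smul (hsa 0)).sub ((hsb 0).add (hsb 1))).mul_self_nonneg
  · exact (((IsSelfAdjoint.all √2).smul (hsa 1)).sub ((hsb 0).sub (hsb 1))).mul_self_nonneg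
  · exact add_nonneg (add_nonneg (add_nonneg (hsq (ha 0)) (hsq (ha 1))) (hsq (hb 0))) (hsq (hb 1))

end CHSH

theorem tsirelson_bound_general
    (ρ : Matrix (Fin 2 × Fin 2) (Fin 2 × Fin 2) ℂ)
    (hρ : ρ.PosSemidef) (hρtr : ρ.trace = 1)
    (A B : Fin 2 → Matrix (Fin 2) (Fin 2) ℂ)
    (hA1 : ∀ x, (1 - A x).PosSemidef) (hA2 : ∀ x, (1 + A x).PosSemidef)
    (hB1 : ∀ y, (1 - B y).PosSemidef) (hB2 : ∀ y, (1 + B y).PosSemidef) :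
    (Matrix.trace (ρ * (A 0 ⊗ₖ B 0 + A 0 ⊗ₖ B 1 + A 1 ⊗ₖ B 0 - A 1 ⊗ₖ B 1))).re
      ≤ 2 * Real.sqrt 2 := by
  open scoped MatrixOrder in
  set a : Fin 2 → Matrix (Fin 2 × Fin 2) (Fin 2 × Fin 2) ℂ := fun x ↦ A x ⊗ₖ 1
  set b : Fin 2 → Matrix (Fin 2 × Fin 2) (Fin 2 × Fin 2) ℂ := fun y ↦ 1 ⊗ₖ B y
  have hchsh : A 0 ⊗ₖ B 0 + A 0 ⊗ₖ B 1 + A 1 ⊗ₖ B 0 - A 1 ⊗ₖ B 1 = chsh a b := by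
    simp only [chsh, a, b, kronecker_one_mul_one_kronecker]
  have hab (x y : Fin 2) : Commute (a x) (b y) := by
    simp only [Commute, SemiconjBy, a, b, kronecker_one_mul_one_kronecker,
      one_kronecker_mul_kronecker_one]
  have ha (x : Fin 2) : a x ∈ Set.Icc (-1) 1 :=
    kronecker_one_mem_Icc ⟨by simpa [le_iff, add_comm] using hA2 x, hA1 x⟩
  have hb (y : Fin 2) : b y ∈ Set.Icc (-1) 1 :=
    one_kronecker_mem_Icc ⟨by simpa [le_iff, add_comm] using hB2 y, hB1 y⟩
  have htrace := hρ.trace_mul_mono (chsh_le_two_mul_sqrt_two hab ha hb)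
  rw [Matrix.mul_smul, Matrix.mul_one, trace_smul, hρtr, ← hchsh] at htrace
  simpa using (Complex.le_def.mp htrace).1

/-- Tsirelson's bound: for any two-qubit density operator and dichotomic observables
(Hermitian with operator norm at most 1, encoded as `1 ± A` positive semidefinite),
the CHSH expectation is at most `2√2`. -/
theorem tsirelson_bound
    (ρ : Matrix (Fin 2 × Fin 2) (Fin 2 × Fin 2) ℂ)
    (hρ : ρ.PosSemidef) (hρtr : ρ.trace = 1)
    (A B : Fin 2 → Matrix (Fin 2) (Fin 2) ℂ)
    (hA : ∀ x, (A x).IsHermitian) (hB : ∀ y, (B y).IsHermitian)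
    (hA1 : ∀ x, (1 - A x).PosSemidef) (hA2 : ∀ x, (1 + A x).PosSemidef)
    (hB1 : ∀ y, (1 - B y).PosSemidef) (hB2 : ∀ y, (1 + B y).PosSemidef) :
    (Matrix.trace (ρ * (A 0 ⊗ₖ B 0 + A 0 ⊗ₖ B 1 + A 1 ⊗ₖ B 0 - A 1 ⊗ₖ B 1))).re
      ≤ 2 * Real.sqrt 2 :=
  tsirelson_bound_general ρ hρ hρtr A B hA1 hA2 hB1 hB2
end

section
/- The two-outcome noisy Pauli POVMs M^η_{±|x} = η·Π_{±|x} + (1−η)·I/2 and M^η_{±|y} = η·Π_{±|y} + (1−η)·I/2, where Π_{±|x} and Π_{±|y} are the spectral projections of σ_x and σ_y, are jointly measurable if and only if η ≤ 1/√2. -/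
/-!
If `G` is a parent POVM, its marginals force `G₊₊ - G₋₋ = η (σx + σy) / 2`,
`G₊₋ - G₋₊ = η (σx - σy) / 2` and `∑ G = 1`. For positive `A`, `B` and any `U` with
`-1 ≤ U ≤ 1`, `tr ((A - B) U) ≤ tr (A + B)`, since the difference is
`tr (A (1 - U)) + tr (B (1 + U))`. Testing the two differences against `(σx ± σy) / √2` gives
`2 √2 η ≤ tr 1 = 2`. Conversely, when `2 η² ≤ 1` the matrices `(1 + η (a σx + b σy)) / 4`,
`a, b = ±1`, are positive and form a parent POVM.
-/

open Matrix Kronecker Complex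
open scoped ComplexOrder

noncomputable section

def σx : Matrix (Fin 2) (Fin 2) ℂ := !![0, 1; 1, 0]
def σy : Matrix (Fin 2) (Fin 2) ℂ := !![0, -I; I, 0]

/-- Spectral projections of `σx`: `Π_{±|x} = (I ± σx)/2`. -/
def Px (a : Fin 2) : Matrix (Fin 2) (Fin 2) ℂ := (1/2 : ℝ) • (1 + sgn a • σx)

/-- Spectral projections of `σy`: `Π_{±|y} = (I ± σy)/2`. -/
def Py (a : Fin 2) : Matrix (Fin 2) (Fin 2) ℂ := (1/2 : ℝ) • (1 + sgn a • σy)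

/-- Noisy POVM element `η Π + (1-η) I/2`. -/
def noisy (η : ℝ) (Pm : Matrix (Fin 2) (Fin 2) ℂ) : Matrix (Fin 2) (Fin 2) ℂ :=
  η • Pm + ((1 - η)/2) • 1

/-- Two two-outcome qubit POVMs are jointly measurable if there is a four-outcome
parent POVM whose marginals reproduce them. -/
def JointlyMeasurable (M0 M1 : Fin 2 → Matrix (Fin 2) (Fin 2) ℂ) : Prop :=
  ∃ G : Fin 2 → Fin 2 → Matrix (Fin 2) (Fin 2) ℂ,
    (∀ a b, (G a b).PosSemidef) ∧
    (∀ a, ∑ b, G a b = M0 a) ∧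
    (∀ b, ∑ a, G a b = M1 b)

open scoped MatrixOrder

namespace Matrix

variable {n 𝕜 : Type*} [Fintype n] [RCLike 𝕜] {A B : Matrix n n 𝕜}

theorem PosSemidef.trace_mul_nonneg (hA : A.PosSemidef) (hB : B.PosSemidef) :
    0 ≤ (A * B).trace := by
  classical
  obtain ⟨S, hS⟩ : ∃ S : Matrix n n 𝕜, Sᴴ = S ∧ S * S = A :=
    ⟨CFC.sqrt A, (CFC.sqrt_nonneg A).isSelfAdjoint, CFC.sqrt_mul_sqrt_self A hA.nonneg⟩
  rw [← hS.2, mul_assoc, trace_mul_comm, mul_assoc]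
  simpa only [hS.1, mul_assoc] using (hB.mul_mul_conjTranspose_same S).trace_nonneg

theorem PosSemidef.trace_sub_mul_le_trace_add [DecidableEq n] (hA : A.PosSemidef)
    (hB : B.PosSemidef) {U : Matrix n n 𝕜} (hU₁ : (1 - U).PosSemidef) (hU₂ : (1 + U).PosSemidef) :
    ((A - B) * U).trace ≤ (A + B).trace := by
  have h : (A + B).trace - ((A - B) * U).trace = (A * (1 - U)).trace + (B * (1 + U)).trace := by
    simp only [← trace_add, ← trace_sub]
    congr 1
    noncomm_ring
  exact sub_nonneg.1 (h ▸ add_nonneg (hA.trace_mul_nonneg hU₁) (hB.trace_mul_nonneg hU₂))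

end Matrix

lemma trace_pauli_mul_pauli (a b c d : ℝ) :
    ((a • σx + b • σy) * (c • σx + d • σy)).trace = ((2 * (a * c + b * d) : ℝ) : ℂ) := by
  simp [σx, σy, trace_fin_two, Complex.ext_iff]
  constructor <;> ring

lemma one_add_pauli_eq_diagonal_add_vecMulVec (c d : ℝ) :
    1 + (c • σx + d • σy) = diagonal ![((1 - (c ^ 2 + d ^ 2) : ℝ) : ℂ), 0]
      + vecMulVec ![c - d * I, 1] (star ![c - d * I, 1]) := by
  ext i j
  fin_cases i <;> fin_cases j <;> simp [σx, σy, vecMulVec, Complex.ext_iff, pow_two, mul_comm]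

lemma posSemidef_one_add_pauli {c d : ℝ} (h : c ^ 2 + d ^ 2 ≤ 1) :
    (1 + (c • σx + d • σy)).PosSemidef := by
  rw [one_add_pauli_eq_diagonal_add_vecMulVec]
  refine .add (posSemidef_diagonal_iff.2 fun i => ?_) (posSemidef_vecMulVec_self_star _)
  fin_cases i
  exacts [Complex.zero_le_real.2 (sub_nonneg.2 h), le_rfl]

lemma sgn_zero : sgn 0 = 1 := rfl

lemma sgn_one : sgn 1 = -1 := rfl

lemma sgn_sq (a : Fin 2) : sgn a ^ 2 = 1 := by
  unfold sgn; split_ifs <;> norm_num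

lemma noisy_Px (η : ℝ) (a : Fin 2) : noisy η (Px a) = (1 / 2 : ℝ) • (1 + (η * sgn a) • σx) := by
  simp only [noisy, Px]; module

lemma noisy_Py (η : ℝ) (a : Fin 2) : noisy η (Py a) = (1 / 2 : ℝ) • (1 + (η * sgn a) • σy) := by
  simp only [noisy, Py]; module

theorem two_mul_le_trace_add_of_sub_eq_pauli {A B : Matrix (Fin 2) (Fin 2) ℂ}
    (hA : A.PosSemidef) (hB : B.PosSemidef) {a b c d : ℝ} (hAB : A - B = a • σx + b • σy)
    (hcd : c ^ 2 + d ^ 2 ≤ 1) : ((2 * (a * c + b * d) : ℝ) : ℂ) ≤ (A + B).trace := by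
  rw [← trace_pauli_mul_pauli, ← hAB]
  refine hA.trace_sub_mul_le_trace_add hB ?_ (posSemidef_one_add_pauli hcd)
  have h : 1 - (c • σx + d • σy) = 1 + ((-c) • σx + (-d) • σy) := by module
  exact h ▸ posSemidef_one_add_pauli (by rwa [neg_sq, neg_sq])

theorem jointlyMeasurable_noisy_pauli_of_two_mul_sq_le_one {η : ℝ} (h : 2 * η ^ 2 ≤ 1) :
    JointlyMeasurable (fun a => noisy η (Px a)) (fun a => noisy η (Py a)) := by
  refine ⟨fun a b => (1 / 4 : ℝ) • (1 + ((η * sgn a) • σx + (η * sgn b) • σy)),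
    fun a b => (posSemidef_one_add_pauli ?_).smul (by norm_num), fun a => ?_, fun b => ?_⟩
  · simp only [mul_pow, sgn_sq]
    linarith
  · simp only [Fin.sum_univ_two, noisy_Px, sgn_zero, sgn_one]
    module
  · simp only [Fin.sum_univ_two, noisy_Py, sgn_zero, sgn_one]
    module

theorem mul_sqrt_two_le_one_of_jointlyMeasurable_noisy_pauli {η : ℝ}
    (h : JointlyMeasurable (fun a => noisy η (Px a)) (fun a => noisy η (Py a))) :
    η * √2 ≤ 1 := by
  obtain ⟨G, hG, hx, hy⟩ := h
  have hx₀ := hx 0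
  have hx₁ := hx 1
  have hy₀ := hy 0
  have hy₁ := hy 1
  simp only [Fin.sum_univ_two, noisy_Px, noisy_Py, sgn_zero, sgn_one] at hx₀ hx₁ hy₀ hy₁
  have hdiag : G 0 0 - G 1 1 = (η / 2) • σx + (η / 2) • σy := by
    linear_combination (norm := module) hx₀ - hy₁
  have hanti : G 0 1 - G 1 0 = (η / 2) • σx + (-(η / 2)) • σy := by
    linear_combination (norm := module) hx₀ - hy₀
  have htotal : (G 0 0 + G 1 1) + (G 0 1 + G 1 0) = 1 := by
    linear_combination (norm := module) hx₀ + hx₁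
  have hc : (√2 / 2) ^ 2 + (√2 / 2) ^ 2 ≤ 1 := by
    rw [div_pow, Real.sq_sqrt zero_le_two]; norm_num
  have h₁ := two_mul_le_trace_add_of_sub_eq_pauli (hG 0 0) (hG 1 1) hdiag hc
  have h₂ := two_mul_le_trace_add_of_sub_eq_pauli (hG 0 1) (hG 1 0) hanti
    (c := √2 / 2) (d := -(√2 / 2)) (by rwa [neg_sq])
  have h := add_le_add h₁ h₂
  rw [← trace_add, htotal, trace_one, Fintype.card_fin] at h
  have h' : 2 * (η / 2 * (√2 / 2) + η / 2 * (√2 / 2))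
      + 2 * (η / 2 * (√2 / 2) + -(η / 2) * -(√2 / 2)) ≤ 2 := by
    exact_mod_cast h
  linarith

theorem noisy_pauli_jointly_measurable_iff_general (η : ℝ) (hη0 : 0 ≤ η) :
    JointlyMeasurable (fun a => noisy η (Px a)) (fun a => noisy η (Py a)) ↔
      η ≤ 1 / Real.sqrt 2 := by
  rw [le_div_iff₀ (by positivity)]
  refine ⟨mul_sqrt_two_le_one_of_jointlyMeasurable_noisy_pauli,
    fun h => jointlyMeasurable_noisy_pauli_of_two_mul_sq_le_one ?_⟩
  have h_sq : (η * √2) ^ 2 ≤ 1 := pow_le_one₀ (by positivity) h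
  rwa [mul_pow, Real.sq_sqrt zero_le_two, mul_comm] at h_sq

/-- The noisy Pauli-`x` and Pauli-`y` POVMs are jointly measurable iff `η ≤ 1/√2`. -/
theorem noisy_pauli_jointly_measurable_iff (η : ℝ) (hη0 : 0 ≤ η) (hη1 : η ≤ 1) :
    JointlyMeasurable (fun a => noisy η (Px a)) (fun a => noisy η (Py a)) ↔
      η ≤ 1 / Real.sqrt 2 :=
  noisy_pauli_jointly_measurable_iff_general η hη0

end
end

section
/- Any tripartite correlation P(abc|xyz) admitting the hybrid nonlocal-local model P(abc|xyz) = Σ_λ p_λ P_λ(a|x)P_λ(bc|yz) + Σ_μ q_μ P_μ(ac|xz)P_μ(b|y) + Σ_ν r_ν P_ν(ab|xy)P_ν(c|z), with nonnegative weights summing to 1, satisfies the Svetlichny inequality ⟨A₀B₀C₁⟩+⟨A₀B₁C₀⟩+⟨A₁B₀C₀⟩−⟨A₁B₁C₁⟩+⟨A₀B₁C₁⟩+⟨A₁B₀C₁⟩+⟨A₁B₁C₀⟩−⟨A₀B₀C₀⟩ ≤ 4. -/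
theorem sv_key (u0 u1 f00 f01 f10 f11 : ℝ)
    (h1 : -1 ≤ u0) (h2 : u0 ≤ 1) (h3 : -1 ≤ u1) (h4 : u1 ≤ 1)
    (h5 : -1 ≤ f00) (h6 : f00 ≤ 1) (h7 : -1 ≤ f01) (h8 : f01 ≤ 1)
    (h9 : -1 ≤ f10) (h10 : f10 ≤ 1) (h11 : -1 ≤ f11) (h12 : f11 ≤ 1) :
    u0 * (-f00 + f01 + f10 + f11) + u1 * (f00 + f01 + f10 - f11) ≤ 4 := by
  set X := -f00 + f01 + f10 + f11 with hX
  set Y := f00 + f01 + f10 - f11 with hY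
  have hu0 : |u0| ≤ 1 := abs_le.2 ⟨h1, h2⟩
  have hu1 : |u1| ≤ 1 := abs_le.2 ⟨h3, h4⟩
  have hbX : u0 * X ≤ |X| := by
    calc u0 * X ≤ |u0 * X| := le_abs_self _
    _ = |u0| * |X| := abs_mul _ _
    _ ≤ 1 * |X| := by gcongr
    _ = |X| := one_mul _
  have hbY : u1 * Y ≤ |Y| := by
    calc u1 * Y ≤ |u1 * Y| := le_abs_self _
    _ = |u1| * |Y| := abs_mul _ _
    _ ≤ 1 * |Y| := by gcongr
    _ = |Y| := one_mul _
  have hXY : |X| + |Y| ≤ 4 := by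
    rcases abs_cases X with ⟨e, _⟩ | ⟨e, _⟩ <;> rcases abs_cases Y with ⟨f, _⟩ | ⟨f, _⟩ <;>
      rw [e, f] <;> simp only [hX, hY] <;> linarith
  linarith

theorem sv_tri_sum {α : Type*} [Fintype α] (t : α → Fin 2 → Fin 2 → Fin 2 → ℝ) :
    ∑ a : Fin 2, ∑ b : Fin 2, ∑ c : Fin 2, sgn a * sgn b * sgn c * (∑ l, t l a b c)
    = ∑ l, ∑ a : Fin 2, ∑ b : Fin 2, ∑ c : Fin 2, sgn a * sgn b * sgn c * t l a b c := by
  simp only [Fin.sum_univ_two, Finset.mul_sum, ← Finset.sum_add_distrib]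

/-- The Svetlichny inequality holds for any hybrid nonlocal-local model, where
arbitrary (possibly signaling) bipartite correlations are shared within each
bipartition and the remaining party is locally correlated. -/
theorem svetlichny_bound
    {ι κ τ : Type*} [Fintype ι] [Fintype κ] [Fintype τ]
    (p : ι → ℝ) (q : κ → ℝ) (r : τ → ℝ)
    (PA1 : ι → Fin 2 → Fin 2 → ℝ) (PBC : ι → Fin 2 → Fin 2 → Fin 2 → Fin 2 → ℝ)
    (PB2 : κ → Fin 2 → Fin 2 → ℝ) (PAC : κ → Fin 2 → Fin 2 → Fin 2 → Fin 2 → ℝ)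
    (PC3 : τ → Fin 2 → Fin 2 → ℝ) (PAB : τ → Fin 2 → Fin 2 → Fin 2 → Fin 2 → ℝ)
    (P : Fin 2 → Fin 2 → Fin 2 → Fin 2 → Fin 2 → Fin 2 → ℝ)
    (E : Fin 2 → Fin 2 → Fin 2 → ℝ)
    (hp : ∀ l, 0 ≤ p l) (hq : ∀ m, 0 ≤ q m) (hr : ∀ n, 0 ≤ r n)
    (hsum : ∑ l, p l + ∑ m, q m + ∑ n, r n = 1)
    (hPA1 : ∀ l a x, 0 ≤ PA1 l a x) (hPA1sum : ∀ l x, ∑ a, PA1 l a x = 1)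
    (hPBC : ∀ l b c y z, 0 ≤ PBC l b c y z) (hPBCsum : ∀ l y z, ∑ b, ∑ c, PBC l b c y z = 1)
    (hPB2 : ∀ m b y, 0 ≤ PB2 m b y) (hPB2sum : ∀ m y, ∑ b, PB2 m b y = 1)
    (hPAC : ∀ m a c x z, 0 ≤ PAC m a c x z) (hPACsum : ∀ m x z, ∑ a, ∑ c, PAC m a c x z = 1)
    (hPC3 : ∀ n c z, 0 ≤ PC3 n c z) (hPC3sum : ∀ n z, ∑ c, PC3 n c z = 1)
    (hPAB : ∀ n a b x y, 0 ≤ PAB n a b x y) (hPABsum : ∀ n x y, ∑ a, ∑ b, PAB n a b x y = 1)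
    (hmodel : ∀ a b c x y z,
      P a b c x y z =
        ∑ l, p l * PA1 l a x * PBC l b c y z +
        ∑ m, q m * PAC m a c x z * PB2 m b y +
        ∑ n, r n * PAB n a b x y * PC3 n c z)
    (hE : ∀ x y z, E x y z = ∑ a, ∑ b, ∑ c, sgn a * sgn b * sgn c * P a b c x y z) :
    E 0 0 1 + E 0 1 0 + E 1 0 0 - E 1 1 1 + E 0 1 1 + E 1 0 1 + E 1 1 0 - E 0 0 0 ≤ 4 := by
  -- single-party correlators
  set A : ι → Fin 2 → ℝ := fun l x => PA1 l 0 x - PA1 l 1 x with hA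
  set B : κ → Fin 2 → ℝ := fun m y => PB2 m 0 y - PB2 m 1 y with hB
  set C : τ → Fin 2 → ℝ := fun n z => PC3 n 0 z - PC3 n 1 z with hC
  set F : ι → Fin 2 → Fin 2 → ℝ := fun l y z =>
    PBC l 0 0 y z - PBC l 0 1 y z - PBC l 1 0 y z + PBC l 1 1 y z with hF
  set G : κ → Fin 2 → Fin 2 → ℝ := fun m x z =>
    PAC m 0 0 x z - PAC m 0 1 x z - PAC m 1 0 x z + PAC m 1 1 x z with hG
  set H : τ → Fin 2 → Fin 2 → ℝ := fun n x y =>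
    PAB n 0 0 x y - PAB n 0 1 x y - PAB n 1 0 x y + PAB n 1 1 x y with hH
  have hE' : ∀ x y z, E x y z =
      ∑ l, p l * (A l x * F l y z) + ∑ m, q m * (G m x z * B m y) +
      ∑ n, r n * (H n x y * C n z) := by
    intro x y z
    rw [hE]
    simp only [hmodel, mul_add, Finset.sum_add_distrib]
    rw [sv_tri_sum, sv_tri_sum, sv_tri_sum]
    congr 1
    · congr 1
      · refine Finset.sum_congr rfl fun l _ => ?_
        simp only [Fin.sum_univ_two, sgn, hA, hF]
        norm_num; ring
      · refine Finset.sum_congr rfl fun m _ => ?_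
        simp only [Fin.sum_univ_two, sgn, hB, hG]
        norm_num; ring
    · refine Finset.sum_congr rfl fun n _ => ?_
      simp only [Fin.sum_univ_two, sgn, hC, hH]
      norm_num; ring
  -- bounds on the correlators
  have hAb : ∀ l x, -1 ≤ A l x ∧ A l x ≤ 1 := fun l x => by
    have := hPA1sum l x; rw [Fin.sum_univ_two] at this
    have h0 := hPA1 l 0 x; have h1 := hPA1 l 1 x
    constructor <;> simp only [hA] <;> linarith
  have hBb : ∀ m y, -1 ≤ B m y ∧ B m y ≤ 1 := fun m y => by
    have := hPB2sum m y; rw [Fin.sum_univ_two] at this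
    have h0 := hPB2 m 0 y; have h1 := hPB2 m 1 y
    constructor <;> simp only [hB] <;> linarith
  have hCb : ∀ n z, -1 ≤ C n z ∧ C n z ≤ 1 := fun n z => by
    have := hPC3sum n z; rw [Fin.sum_univ_two] at this
    have h0 := hPC3 n 0 z; have h1 := hPC3 n 1 z
    constructor <;> simp only [hC] <;> linarith
  have hFb : ∀ l y z, -1 ≤ F l y z ∧ F l y z ≤ 1 := fun l y z => by
    have := hPBCsum l y z; simp only [Fin.sum_univ_two] at this
    have h00 := hPBC l 0 0 y z; have h01 := hPBC l 0 1 y z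
    have h10 := hPBC l 1 0 y z; have h11 := hPBC l 1 1 y z
    constructor <;> simp only [hF] <;> linarith
  have hGb : ∀ m x z, -1 ≤ G m x z ∧ G m x z ≤ 1 := fun m x z => by
    have := hPACsum m x z; simp only [Fin.sum_univ_two] at this
    have h00 := hPAC m 0 0 x z; have h01 := hPAC m 0 1 x z
    have h10 := hPAC m 1 0 x z; have h11 := hPAC m 1 1 x z
    constructor <;> simp only [hG] <;> linarith
  have hHb : ∀ n x y, -1 ≤ H n x y ∧ H n x y ≤ 1 := fun n x y => by
    have := hPABsum n x y; simp only [Fin.sum_univ_two] at this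
    have h00 := hPAB n 0 0 x y; have h01 := hPAB n 0 1 x y
    have h10 := hPAB n 1 0 x y; have h11 := hPAB n 1 1 x y
    constructor <;> simp only [hH] <;> linarith
  -- reorganize the Svetlichny expression
  have hmain : E 0 0 1 + E 0 1 0 + E 1 0 0 - E 1 1 1 + E 0 1 1 + E 1 0 1 + E 1 1 0 - E 0 0 0 =
      (∑ l, p l * (A l 0 * (-F l 0 0 + F l 0 1 + F l 1 0 + F l 1 1) +
                   A l 1 * (F l 0 0 + F l 0 1 + F l 1 0 - F l 1 1))) +
      (∑ m, q m * (B m 0 * (-G m 0 0 + G m 0 1 + G m 1 0 + G m 1 1) +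
                   B m 1 * (G m 0 0 + G m 0 1 + G m 1 0 - G m 1 1))) +
      (∑ n, r n * (C n 0 * (-H n 0 0 + H n 0 1 + H n 1 0 + H n 1 1) +
                   C n 1 * (H n 0 0 + H n 0 1 + H n 1 0 - H n 1 1))) := by
    simp only [hE']
    rw [show ∀ a1 b1 c1 a2 b2 c2 a3 b3 c3 a4 b4 c4 a5 b5 c5 a6 b6 c6 a7 b7 c7 a8 b8 c8 : ℝ,
        (a1+b1+c1)+(a2+b2+c2)+(a3+b3+c3)-(a4+b4+c4)+(a5+b5+c5)+(a6+b6+c6)+(a7+b7+c7)-(a8+b8+c8)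
        = (a1+a2+a3-a4+a5+a6+a7-a8)+((b1+b2+b3-b4+b5+b6+b7-b8)+(c1+c2+c3-c4+c5+c6+c7-c8))
        from fun _ _ _ _ _ _ _ _ _ _ _ _ _ _ _ _ _ _ _ _ _ _ _ _ => by ring]
    rw [← add_assoc]
    congr 1
    · congr 1
      · simp only [← Finset.sum_add_distrib, ← Finset.sum_sub_distrib]
        exact Finset.sum_congr rfl fun l _ => by ring
      · simp only [← Finset.sum_add_distrib, ← Finset.sum_sub_distrib]
        exact Finset.sum_congr rfl fun m _ => by ring
    · simp only [← Finset.sum_add_distrib, ← Finset.sum_sub_distrib]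
      exact Finset.sum_congr rfl fun n _ => by ring
  rw [hmain]
  have b1 : (∑ l, p l * (A l 0 * (-F l 0 0 + F l 0 1 + F l 1 0 + F l 1 1) +
      A l 1 * (F l 0 0 + F l 0 1 + F l 1 0 - F l 1 1))) ≤ ∑ l, p l * 4 := by
    refine Finset.sum_le_sum fun l _ => mul_le_mul_of_nonneg_left ?_ (hp l)
    exact sv_key _ _ _ _ _ _ (hAb l 0).1 (hAb l 0).2 (hAb l 1).1 (hAb l 1).2
      (hFb l 0 0).1 (hFb l 0 0).2 (hFb l 0 1).1 (hFb l 0 1).2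
      (hFb l 1 0).1 (hFb l 1 0).2 (hFb l 1 1).1 (hFb l 1 1).2
  have b2 : (∑ m, q m * (B m 0 * (-G m 0 0 + G m 0 1 + G m 1 0 + G m 1 1) +
      B m 1 * (G m 0 0 + G m 0 1 + G m 1 0 - G m 1 1))) ≤ ∑ m, q m * 4 := by
    refine Finset.sum_le_sum fun m _ => mul_le_mul_of_nonneg_left ?_ (hq m)
    exact sv_key _ _ _ _ _ _ (hBb m 0).1 (hBb m 0).2 (hBb m 1).1 (hBb m 1).2
      (hGb m 0 0).1 (hGb m 0 0).2 (hGb m 0 1).1 (hGb m 0 1).2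
      (hGb m 1 0).1 (hGb m 1 0).2 (hGb m 1 1).1 (hGb m 1 1).2
  have b3 : (∑ n, r n * (C n 0 * (-H n 0 0 + H n 0 1 + H n 1 0 + H n 1 1) +
      C n 1 * (H n 0 0 + H n 0 1 + H n 1 0 - H n 1 1))) ≤ ∑ n, r n * 4 := by
    refine Finset.sum_le_sum fun n _ => mul_le_mul_of_nonneg_left ?_ (hr n)
    exact sv_key _ _ _ _ _ _ (hCb n 0).1 (hCb n 0).2 (hCb n 1).1 (hCb n 1).2
      (hHb n 0 0).1 (hHb n 0 0).2 (hHb n 0 1).1 (hHb n 0 1).2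
      (hHb n 1 0).1 (hHb n 1 0).2 (hHb n 1 1).1 (hHb n 1 1).2
  have : ∑ l, p l * 4 + ∑ m, q m * 4 + ∑ n, r n * 4 = 4 := by
    simp only [← Finset.sum_mul]
    nlinarith [hsum]
  linarith
end

section
/- Any tripartite correlation P(abc|xyz) admitting a fully local hidden variable model P(abc|xyz) = Σ_λ p_λ P_λ(a|x)P_λ(b|y)P_λ(c|z) satisfies the Mermin inequality ⟨A₀B₀C₁⟩ + ⟨A₀B₁C₀⟩ + ⟨A₁B₀C₀⟩ − ⟨A₁B₁C₁⟩ ≤ 2. -/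
lemma mul_le_abs' (x t : ℝ) (hx : |x| ≤ 1) : x * t ≤ |t| := by
  calc x * t ≤ |x * t| := le_abs_self _
    _ = |x| * |t| := abs_mul _ _
    _ ≤ 1 * |t| := mul_le_mul_of_nonneg_right hx (abs_nonneg t)
    _ = |t| := one_mul _

lemma mermin_pointwise (a0 a1 b0 b1 c0 c1 : ℝ)
    (ha0 : |a0| ≤ 1) (ha1 : |a1| ≤ 1) (hb0 : |b0| ≤ 1) (hb1 : |b1| ≤ 1)
    (hc0 : |c0| ≤ 1) (hc1 : |c1| ≤ 1) :
    a0 * b0 * c1 + a0 * b1 * c0 + a1 * b0 * c0 - a1 * b1 * c1 ≤ 2 := by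
  have hu : a0 * (b0 * c1 + b1 * c0) ≤ |b0 * c1 + b1 * c0| := mul_le_abs' _ _ ha0
  have hv : a1 * (b0 * c0 - b1 * c1) ≤ |b0 * c0 - b1 * c1| := mul_le_abs' _ _ ha1
  have hc : |c0 + c1| + |c0 - c1| ≤ 2 := by
    rw [abs_le] at hc0 hc1
    rcases abs_cases (c0 + c1) with ⟨h1, _⟩ | ⟨h1, _⟩ <;>
      rcases abs_cases (c0 - c1) with ⟨h2, _⟩ | ⟨h2, _⟩ <;> linarith
  have hsum : |b0 * c1 + b1 * c0| + |b0 * c0 - b1 * c1| ≤ |c0 + c1| + |c0 - c1| := by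
    rcases abs_cases (b0 * c1 + b1 * c0) with ⟨h1, _⟩ | ⟨h1, _⟩ <;>
      rcases abs_cases (b0 * c0 - b1 * c1) with ⟨h2, _⟩ | ⟨h2, _⟩ <;>
      nlinarith [mul_le_abs' b0 (c0 + c1) hb0, mul_le_abs' b1 (c0 - c1) hb1,
        mul_le_abs' b0 (c1 - c0) hb0, mul_le_abs' b1 (c0 + c1) hb1,
        mul_le_abs' b0 (-(c0 + c1)) hb0, mul_le_abs' b1 (-(c0 - c1)) hb1,
        mul_le_abs' b0 (c0 - c1) hb0, mul_le_abs' b1 (c1 - c0) hb1,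
        mul_le_abs' b1 (-(c0 + c1)) hb1, mul_le_abs' b0 (-(c1 - c0)) hb0,
        abs_neg (c0 + c1), abs_neg (c0 - c1), abs_sub_comm c0 c1]
  nlinarith [hu, hv, hsum, hc]

/-- The Mermin inequality holds for any fully local hidden variable model. -/
theorem mermin_lhv_bound
    {ι : Type*} [Fintype ι]
    (p : ι → ℝ)
    (PA PB PC : ι → Fin 2 → Fin 2 → ℝ)
    (P : Fin 2 → Fin 2 → Fin 2 → Fin 2 → Fin 2 → Fin 2 → ℝ)
    (E : Fin 2 → Fin 2 → Fin 2 → ℝ)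
    (hp : ∀ l, 0 ≤ p l) (hpsum : ∑ l, p l = 1)
    (hPA : ∀ l a x, 0 ≤ PA l a x) (hPAsum : ∀ l x, ∑ a, PA l a x = 1)
    (hPB : ∀ l b y, 0 ≤ PB l b y) (hPBsum : ∀ l y, ∑ b, PB l b y = 1)
    (hPC : ∀ l c z, 0 ≤ PC l c z) (hPCsum : ∀ l z, ∑ c, PC l c z = 1)
    (hmodel : ∀ a b c x y z,
      P a b c x y z = ∑ l, p l * PA l a x * PB l b y * PC l c z)
    (hE : ∀ x y z, E x y z = ∑ a, ∑ b, ∑ c, sgn a * sgn b * sgn c * P a b c x y z) :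
    E 0 0 1 + E 0 1 0 + E 1 0 0 - E 1 1 1 ≤ 2 := by
  set A : ι → Fin 2 → ℝ := fun l x => PA l 0 x - PA l 1 x with hA
  set B : ι → Fin 2 → ℝ := fun l y => PB l 0 y - PB l 1 y with hB
  set C : ι → Fin 2 → ℝ := fun l z => PC l 0 z - PC l 1 z with hC
  have hAle : ∀ l x, |A l x| ≤ 1 := by
    intro l x
    have h := hPAsum l x
    rw [Fin.sum_univ_two] at h
    rw [abs_le]
    constructor <;> simp only [hA] <;> nlinarith [hPA l 0 x, hPA l 1 x]
  have hBle : ∀ l y, |B l y| ≤ 1 := by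
    intro l y
    have h := hPBsum l y
    rw [Fin.sum_univ_two] at h
    rw [abs_le]
    constructor <;> simp only [hB] <;> nlinarith [hPB l 0 y, hPB l 1 y]
  have hCle : ∀ l z, |C l z| ≤ 1 := by
    intro l z
    have h := hPCsum l z
    rw [Fin.sum_univ_two] at h
    rw [abs_le]
    constructor <;> simp only [hC] <;> nlinarith [hPC l 0 z, hPC l 1 z]
  have hEeq : ∀ x y z, E x y z = ∑ l, p l * (A l x * B l y * C l z) := by
    intro x y z
    rw [hE x y z]
    simp only [Fin.sum_univ_two, hmodel, sgn, Finset.mul_sum, ← Finset.sum_add_distrib]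
    apply Finset.sum_congr rfl
    intro l _
    simp only [hA, hB, hC]
    norm_num
    ring
  rw [hEeq, hEeq, hEeq, hEeq]
  rw [← Finset.sum_add_distrib, ← Finset.sum_add_distrib, ← Finset.sum_sub_distrib]
  calc ∑ l, (p l * (A l 0 * B l 0 * C l 1) + p l * (A l 0 * B l 1 * C l 0)
        + p l * (A l 1 * B l 0 * C l 0) - p l * (A l 1 * B l 1 * C l 1))
      ≤ ∑ l, p l * 2 := by
        apply Finset.sum_le_sum
        intro l _
        have := mermin_pointwise (A l 0) (A l 1) (B l 0) (B l 1) (C l 0) (C l 1)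
          (hAle l 0) (hAle l 1) (hBle l 0) (hBle l 1) (hCle l 0) (hCle l 1)
        nlinarith [hp l]
    _ = 2 := by rw [← Finset.sum_mul, hpsum, one_mul]
end

section
/- For any two-qubit state ρ and qubit observables A₀, A₁, B₀, B₁ with ‖A_x‖,‖B_y‖ ≤ 1, the Mermin operators satisfy ⟨A₀B₀ − A₁B₁⟩ ≤ 2 and (⟨A₀B₀−A₁B₁⟩)² + (⟨A₀B₁+A₁B₀⟩)² ≤ 4; in particular for any signs s,t ∈ {−1,+1}, s·⟨A₀B₀−A₁B₁⟩ + t·⟨A₀B₁+A₁B₀⟩ ≤ 2√2. -/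
/-!
Encode the observables as `X = A₀ + i A₁` and `Y = B₀ + i B₁`. Then `X ⊗ Y` has Hermitian part
`A₀B₀ - A₁B₁` and anti-Hermitian part `i (A₀B₁ + A₁B₀)`, so `M² + M'² = |⟨X ⊗ Y⟩|²`. Writing
`X ⊗ Y` as `(X ⊗ 1)(1 ⊗ Y)` and as `(1 ⊗ Y)(X ⊗ 1)`, Cauchy–Schwarz for the state gives
`|⟨X ⊗ Y⟩|² ≤ ⟨XX* ⊗ 1⟩⟨1 ⊗ Y*Y⟩` and `|⟨X ⊗ Y⟩|² ≤ ⟨1 ⊗ YY*⟩⟨X*X ⊗ 1⟩`. Neither `XX*` nor `X*X`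
need be below `2`, but their sum `2 (A₀² + A₁²)` is below `4`, and likewise for `Y`; AM–GM on the
two bounds gives `|⟨X ⊗ Y⟩|² ≤ 4`.
-/

open Matrix Kronecker
open scoped ComplexOrder

namespace Matrix

variable {𝕜 n m : Type*} [RCLike 𝕜]

lemma IsHermitian.kronecker {A : Matrix n n 𝕜} {B : Matrix m m 𝕜} (hA : A.IsHermitian)
    (hB : B.IsHermitian) : (A ⊗ₖ B).IsHermitian := by
  rw [IsHermitian, conjTranspose_kronecker, hA.eq, hB.eq]

def complexCombination (A₀ A₁ : Matrix n n ℂ) : Matrix n n ℂ := A₀ + Complex.I • A₁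

lemma conjTranspose_complexCombination {A₀ A₁ : Matrix n n ℂ} (h₀ : A₀.IsHermitian)
    (h₁ : A₁.IsHermitian) : (complexCombination A₀ A₁)ᴴ = A₀ - Complex.I • A₁ := by
  rw [complexCombination, conjTranspose_add, conjTranspose_smul, h₀.eq, h₁.eq, Complex.star_def,
    Complex.conj_I, neg_smul, sub_eq_add_neg]

lemma kronecker_complexCombination (A₀ A₁ : Matrix n n ℂ) (B₀ B₁ : Matrix m m ℂ) :
    complexCombination A₀ A₁ ⊗ₖ complexCombination B₀ B₁ =
      complexCombination (A₀ ⊗ₖ B₀ - A₁ ⊗ₖ B₁) (A₀ ⊗ₖ B₁ + A₁ ⊗ₖ B₀) := by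
  simp only [complexCombination, add_kronecker, kronecker_add, smul_kronecker, kronecker_smul]
  linear_combination (norm := module) Complex.I_sq • (A₁ ⊗ₖ B₁)

variable [Fintype n] [Fintype m]

lemma IsHermitian.im_trace_mul {ρ S : Matrix n n 𝕜} (hρ : ρ.IsHermitian) (hS : S.IsHermitian) :
    RCLike.im (ρ * S).trace = 0 := by
  rw [← RCLike.conj_eq_iff_im, starRingEnd_apply, ← trace_conjTranspose, conjTranspose_mul,
    hρ.eq, hS.eq, trace_mul_comm]

open scoped MatrixOrder in
lemma PosSemidef.re_trace_mul_nonneg {ρ S : Matrix n n 𝕜} (hρ : ρ.PosSemidef)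
    (hS : S.PosSemidef) : 0 ≤ RCLike.re (ρ * S).trace := by
  classical
  obtain ⟨y, rfl⟩ := CStarAlgebra.nonneg_iff_eq_star_mul_self.mp hS.nonneg
  rw [star_eq_conjTranspose, ← Matrix.mul_assoc, trace_mul_cycle]
  exact (RCLike.nonneg_iff.mp (hρ.mul_mul_conjTranspose_same y).trace_nonneg).1

lemma PosSemidef.re_trace_mul_le [DecidableEq n] {ρ S : Matrix n n 𝕜} (hρ : ρ.PosSemidef)
    (hρtr : ρ.trace = 1) {c : ℝ} (hS : (c • 1 - S).PosSemidef) :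
    RCLike.re (ρ * S).trace ≤ c := by
  have h := hρ.re_trace_mul_nonneg hS
  rw [Matrix.mul_sub, trace_sub, Matrix.mul_smul, Matrix.mul_one, trace_smul, hρtr, map_sub,
    RCLike.smul_re, RCLike.one_re, mul_one] at h
  linarith

lemma PosSemidef.smul_one_sub_kronecker_one [DecidableEq n] [DecidableEq m] {S : Matrix n n 𝕜}
    {c : ℝ} (hS : (c • 1 - S).PosSemidef) :
    (c • 1 - S ⊗ₖ (1 : Matrix m m 𝕜)).PosSemidef := by
  have h : (c • 1 - S) ⊗ₖ (1 : Matrix m m 𝕜) = c • 1 - S ⊗ₖ 1 := by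
    rw [eq_sub_iff_add_eq, ← add_kronecker, sub_add_cancel, smul_kronecker, one_kronecker_one]
  exact h ▸ hS.kronecker .one

lemma PosSemidef.smul_one_sub_one_kronecker [DecidableEq n] [DecidableEq m] {S : Matrix m m 𝕜}
    {c : ℝ} (hS : (c • 1 - S).PosSemidef) :
    (c • 1 - (1 : Matrix n n 𝕜) ⊗ₖ S).PosSemidef := by
  have h : (1 : Matrix n n 𝕜) ⊗ₖ (c • 1 - S) = c • 1 - 1 ⊗ₖ S := by
    rw [eq_sub_iff_add_eq, ← kronecker_add, sub_add_cancel, kronecker_smul, one_kronecker_one]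
  exact h ▸ PosSemidef.one.kronecker hS

lemma PosSemidef.one_sub_mul_self [DecidableEq n] {A : Matrix n n 𝕜} (h₁ : (1 - A).PosSemidef)
    (h₂ : (1 + A).PosSemidef) : (1 - A * A).PosSemidef := by
  have h := (h₂.conjTranspose_mul_mul_same (1 - A)).add (h₁.conjTranspose_mul_mul_same (1 + A))
  rw [h₁.isHermitian.eq, h₂.isHermitian.eq,
    show (1 - A) * (1 + A) * (1 - A) + (1 + A) * (1 - A) * (1 + A) = (2 : ℝ) • (1 - A * A) by
      rw [two_smul]; noncomm_ring] at h
  simpa [smul_smul] using h.smul (by norm_num : (0 : ℝ) ≤ 2⁻¹)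

lemma PosSemidef.sq_norm_trace_mul_mul_le {ρ : Matrix n n 𝕜} (hρ : ρ.PosSemidef)
    (P Q : Matrix n n 𝕜) :
    ‖(ρ * P * Q).trace‖ ^ 2 ≤
      RCLike.re (ρ * (P * Pᴴ)).trace * RCLike.re (ρ * (Qᴴ * Q)).trace := by
  let := ρ.toMatrixSeminormedAddCommGroup hρ
  let := ρ.toMatrixInnerProductSpace hρ
  have h := inner_mul_inner_self_le (𝕜 := 𝕜) Pᴴ Q
  rw [norm_inner_symm Q, ← sq] at h
  change ‖(Q * ρ * Pᴴᴴ).trace‖ ^ 2 ≤ RCLike.re (Pᴴ * ρ * Pᴴᴴ).trace *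
    RCLike.re (Q * ρ * Qᴴ).trace at h
  rw [trace_mul_cycle, trace_mul_cycle', trace_mul_cycle' ρ Qᴴ]
  simpa only [Matrix.mul_assoc, conjTranspose_conjTranspose] using h

lemma PosSemidef.sq_norm_trace_mul_kronecker_le [DecidableEq n] [DecidableEq m]
    {ρ : Matrix (n × m) (n × m) 𝕜} (hρ : ρ.PosSemidef) (X : Matrix n n 𝕜) (Y : Matrix m m 𝕜) :
    ‖(ρ * (X ⊗ₖ Y)).trace‖ ^ 2 ≤ RCLike.re (ρ * ((X * Xᴴ) ⊗ₖ 1)).trace *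
        RCLike.re (ρ * (1 ⊗ₖ (Yᴴ * Y))).trace ∧
      ‖(ρ * (X ⊗ₖ Y)).trace‖ ^ 2 ≤ RCLike.re (ρ * ((Xᴴ * X) ⊗ₖ 1)).trace *
        RCLike.re (ρ * (1 ⊗ₖ (Y * Yᴴ))).trace := by
  have hXY : X ⊗ₖ Y = (X ⊗ₖ 1) * (1 ⊗ₖ Y) := by rw [← mul_kronecker_mul, mul_one, one_mul]
  have hYX : X ⊗ₖ Y = (1 ⊗ₖ Y) * (X ⊗ₖ 1) := by rw [← mul_kronecker_mul, mul_one, one_mul]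
  constructor
  · have h := hρ.sq_norm_trace_mul_mul_le (X ⊗ₖ 1) (1 ⊗ₖ Y)
    simpa only [Matrix.mul_assoc, ← hXY, conjTranspose_kronecker, conjTranspose_one,
      ← mul_kronecker_mul, mul_one] using h
  · have h := hρ.sq_norm_trace_mul_mul_le (1 ⊗ₖ Y) (X ⊗ₖ 1)
    rw [mul_comm]
    simpa only [Matrix.mul_assoc, ← hYX, conjTranspose_kronecker, conjTranspose_one,
      ← mul_kronecker_mul, mul_one] using h

lemma trace_mul_complexCombination {ρ A₀ A₁ : Matrix n n ℂ} (hρ : ρ.IsHermitian)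
    (h₀ : A₀.IsHermitian) (h₁ : A₁.IsHermitian) :
    (ρ * complexCombination A₀ A₁).trace = (ρ * A₀).trace.re + (ρ * A₁).trace.re * Complex.I := by
  have e₀ : (ρ * A₀).trace.im = 0 := hρ.im_trace_mul h₀
  have e₁ : (ρ * A₁).trace.im = 0 := hρ.im_trace_mul h₁
  apply Complex.ext <;> simp [complexCombination, Matrix.mul_add, e₀, e₁]

lemma complexCombination_mul_conjTranspose_add_conjTranspose_mul {A₀ A₁ : Matrix n n ℂ}
    (h₀ : A₀.IsHermitian) (h₁ : A₁.IsHermitian) :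
    complexCombination A₀ A₁ * (complexCombination A₀ A₁)ᴴ +
      (complexCombination A₀ A₁)ᴴ * complexCombination A₀ A₁ = (2 : ℝ) • (A₀ * A₀ + A₁ * A₁) := by
  rw [conjTranspose_complexCombination h₀ h₁, complexCombination]
  simp only [add_mul, mul_add, sub_mul, mul_sub, smul_mul_assoc, mul_smul_comm]
  linear_combination (norm := module) (-2 : ℂ) • Complex.I_sq • (A₁ * A₁)

lemma posSemidef_four_smul_one_sub_complexCombination [DecidableEq n] {A₀ A₁ : Matrix n n ℂ}
    (h₀ : A₀.IsHermitian) (h₁ : A₁.IsHermitian) (h₀₁ : (1 - A₀).PosSemidef)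
    (h₀₂ : (1 + A₀).PosSemidef) (h₁₁ : (1 - A₁).PosSemidef) (h₁₂ : (1 + A₁).PosSemidef) :
    ((4 : ℝ) • 1 - (complexCombination A₀ A₁ * (complexCombination A₀ A₁)ᴴ +
      (complexCombination A₀ A₁)ᴴ * complexCombination A₀ A₁)).PosSemidef := by
  rw [complexCombination_mul_conjTranspose_add_conjTranspose_mul h₀ h₁,
    show (4 : ℝ) • 1 - (2 : ℝ) • (A₀ * A₀ + A₁ * A₁) =
      (2 : ℝ) • ((1 - A₀ * A₀) + (1 - A₁ * A₁)) by module]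
  exact ((h₀₁.one_sub_mul_self h₀₂).add (h₁₁.one_sub_mul_self h₁₂)).smul zero_le_two

end Matrix

lemma min_mul_mul_le_sq {a a' b b' c : ℝ} (ha : 0 ≤ a) (ha' : 0 ≤ a') (hb : 0 ≤ b)
    (hb' : 0 ≤ b') (haa' : a + a' ≤ 2 * c) (hbb' : b + b' ≤ 2 * c) :
    min (a * b) (a' * b') ≤ c ^ 2 := by
  have hmin : 0 ≤ min (a * b) (a' * b') := le_min (mul_nonneg ha hb) (mul_nonneg ha' hb')
  have hA : a * a' ≤ c ^ 2 := by nlinarith [sq_nonneg (a - a')]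
  have hB : b * b' ≤ c ^ 2 := by nlinarith [sq_nonneg (b - b')]
  refine (pow_le_pow_iff_left₀ hmin (sq_nonneg c) two_ne_zero).mp ?_
  calc min (a * b) (a' * b') ^ 2 ≤ (a * b) * (a' * b') := by
        rw [sq]; exact mul_le_mul (min_le_left _ _) (min_le_right _ _) hmin (mul_nonneg ha hb)
    _ = (a * a') * (b * b') := by ring
    _ ≤ c ^ 2 * c ^ 2 := mul_le_mul hA hB (mul_nonneg hb hb') (sq_nonneg c)
    _ = (c ^ 2) ^ 2 := by ring

lemma add_le_sqrt_two_mul {u v r : ℝ} (hr : 0 ≤ r) (h : u ^ 2 + v ^ 2 ≤ r ^ 2) :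
    u + v ≤ √2 * r := by
  have h2 : √2 ^ 2 = 2 := Real.sq_sqrt zero_le_two
  apply abs_le_of_sq_le_sq' _ (by positivity) |>.2
  rw [mul_pow, h2]
  nlinarith [sq_nonneg (u - v)]

/-- Bounds on the Mermin operators `A₀B₀ - A₁B₁` and `A₀B₁ + A₁B₀` for any two-qubit
state and dichotomic observables of operator norm at most 1. -/
theorem mermin_operator_bounds
    (ρ : Matrix (Fin 2 × Fin 2) (Fin 2 × Fin 2) ℂ)
    (hρ : ρ.PosSemidef) (hρtr : ρ.trace = 1)
    (A B : Fin 2 → Matrix (Fin 2) (Fin 2) ℂ)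
    (hA : ∀ x, (A x).IsHermitian) (hB : ∀ y, (B y).IsHermitian)
    (hA1 : ∀ x, (1 - A x).PosSemidef) (hA2 : ∀ x, (1 + A x).PosSemidef)
    (hB1 : ∀ y, (1 - B y).PosSemidef) (hB2 : ∀ y, (1 + B y).PosSemidef)
    (M M' : ℝ)
    (hM : M = (Matrix.trace (ρ * (A 0 ⊗ₖ B 0 - A 1 ⊗ₖ B 1))).re)
    (hM' : M' = (Matrix.trace (ρ * (A 0 ⊗ₖ B 1 + A 1 ⊗ₖ B 0))).re) :
    M ≤ 2 ∧ M ^ 2 + M' ^ 2 ≤ 4 ∧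
      ∀ s t : ℝ, (s = 1 ∨ s = -1) → (t = 1 ∨ t = -1) →
        s * M + t * M' ≤ 2 * Real.sqrt 2 := by
  have hXX := hρ.re_trace_mul_le hρtr (posSemidef_four_smul_one_sub_complexCombination (hA 0)
    (hA 1) (hA1 0) (hA2 0) (hA1 1) (hA2 1)).smul_one_sub_kronecker_one
  have hYY := hρ.re_trace_mul_le hρtr (posSemidef_four_smul_one_sub_complexCombination (hB 0)
    (hB 1) (hB1 0) (hB2 0) (hB1 1) (hB2 1)).smul_one_sub_one_kronecker
  rw [Matrix.add_kronecker, Matrix.mul_add, trace_add, map_add] at hXX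
  rw [Matrix.kronecker_add, Matrix.mul_add, trace_add, map_add] at hYY
  set X := complexCombination (A 0) (A 1)
  set Y := complexCombination (B 0) (B 1)
  have hz : ‖(ρ * (X ⊗ₖ Y)).trace‖ ^ 2 = M ^ 2 + M' ^ 2 := by
    rw [kronecker_complexCombination, trace_mul_complexCombination hρ.isHermitian
      (((hA 0).kronecker (hB 0)).sub ((hA 1).kronecker (hB 1)))
      (((hA 0).kronecker (hB 1)).add ((hA 1).kronecker (hB 0))),
      Complex.norm_add_mul_I, Real.sq_sqrt (by positivity), hM, hM']
  obtain ⟨hXY, hYX⟩ := hρ.sq_norm_trace_mul_kronecker_le X Y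
  have h4 : M ^ 2 + M' ^ 2 ≤ 2 ^ 2 := hz ▸ (le_min hXY hYX).trans <| min_mul_mul_le_sq
    (hρ.re_trace_mul_nonneg ((posSemidef_self_mul_conjTranspose X).kronecker .one))
    (hρ.re_trace_mul_nonneg ((posSemidef_conjTranspose_mul_self X).kronecker .one))
    (hρ.re_trace_mul_nonneg (PosSemidef.one.kronecker (posSemidef_conjTranspose_mul_self Y)))
    (hρ.re_trace_mul_nonneg (PosSemidef.one.kronecker (posSemidef_self_mul_conjTranspose Y)))
    (by linarith) (by linarith)
  refine ⟨(abs_le_of_sq_le_sq' (by linarith [sq_nonneg M']) zero_le_two).2, by linarith,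
    fun s t hs ht => ?_⟩
  have hs2 : s ^ 2 = 1 := by rcases hs with rfl | rfl <;> norm_num
  have ht2 : t ^ 2 = 1 := by rcases ht with rfl | rfl <;> norm_num
  rw [mul_comm 2]
  exact add_le_sqrt_two_mul zero_le_two (by rwa [mul_pow, mul_pow, hs2, ht2, one_mul, one_mul])
end

section
/- Any correlation P(abc|xyz) admitting the steering-LHS model P(abc|xyz) = Σ_λ p_λ P_λ^{AB}(ab|xy)P_λ(c|z) + Σ_μ q_μ P_μ(a|x)P_μ(b|y)P_μ(c|z), where every P_λ^{AB}(ab|xy) is a Bell-local (LHV) bipartite distribution, satisfies ⟨(A₀B₀−A₁B₁)C₁⟩ + ⟨(A₀B₁+A₁B₀)C₀⟩ ≤ 2. -/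
/-- A bipartite conditional distribution is Bell-local if it admits a local hidden
variable decomposition. -/
def BellLocal (Q : Fin 2 → Fin 2 → Fin 2 → Fin 2 → ℝ) : Prop :=
  ∃ (n : ℕ) (r : Fin n → ℝ) (PA PB : Fin n → Fin 2 → Fin 2 → ℝ),
    (∀ ν, 0 ≤ r ν) ∧ (∑ ν, r ν = 1) ∧
    (∀ ν a x, 0 ≤ PA ν a x) ∧ (∀ ν x, ∑ a, PA ν a x = 1) ∧
    (∀ ν b y, 0 ≤ PB ν b y) ∧ (∀ ν y, ∑ b, PB ν b y = 1) ∧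
    (∀ a b x y, Q a b x y = ∑ ν, r ν * PA ν a x * PB ν b y)

lemma absmul (A w : ℝ) (h : |A| ≤ 1) : |A*w| ≤ |w| := by
  rw [abs_mul]; exact mul_le_of_le_one_left (abs_nonneg _) h

lemma chsh_s13 (A0 A1 B0 B1 C0 C1 : ℝ)
    (hA0 : |A0| ≤ 1) (hA1 : |A1| ≤ 1) (hB0 : |B0| ≤ 1) (hB1 : |B1| ≤ 1)
    (hC0 : |C0| ≤ 1) (hC1 : |C1| ≤ 1) :
    A0*B0*C1 - A1*B1*C1 + A0*B1*C0 + A1*B0*C0 ≤ 2 := by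
  have hu : |B0+B1| + |B0-B1| ≤ 2 := by
    obtain ⟨hB0l, hB0u⟩ := abs_le.mp hB0
    obtain ⟨hB1l, hB1u⟩ := abs_le.mp hB1
    rcases abs_cases (B0+B1) with ⟨e1, _⟩ | ⟨e1, _⟩ <;>
    rcases abs_cases (B0-B1) with ⟨e2, _⟩ | ⟨e2, _⟩ <;> rw [e1, e2] <;> linarith
  have h3 : |A0*B0 - A1*B1| + |A0*B1 + A1*B0| ≤ 2 := by
    have h0u := abs_le.mp (absmul A0 (B0+B1) hA0)
    have h0v := abs_le.mp (absmul A0 (B0-B1) hA0)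
    have h1u := abs_le.mp (absmul A1 (B0+B1) hA1)
    have h1v := abs_le.mp (absmul A1 (B0-B1) hA1)
    rcases abs_cases (A0*B0 - A1*B1) with ⟨e1, _⟩ | ⟨e1, _⟩ <;>
    rcases abs_cases (A0*B1 + A1*B0) with ⟨e2, _⟩ | ⟨e2, _⟩ <;> rw [e1, e2] <;>
    nlinarith [h0u.1, h0u.2, h0v.1, h0v.2, h1u.1, h1u.2, h1v.1, h1v.2, hu]
  have h1 : (A0*B0 - A1*B1)*C1 ≤ |A0*B0 - A1*B1| := by
    calc (A0*B0 - A1*B1)*C1 = C1 * (A0*B0 - A1*B1) := by ring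
    _ ≤ |C1 * (A0*B0 - A1*B1)| := le_abs_self _
    _ ≤ |A0*B0 - A1*B1| := absmul _ _ hC1
  have h2 : (A0*B1 + A1*B0)*C0 ≤ |A0*B1 + A1*B0| := by
    calc (A0*B1 + A1*B0)*C0 = C0 * (A0*B1 + A1*B0) := by ring
    _ ≤ |C0 * (A0*B1 + A1*B0)| := le_abs_self _
    _ ≤ |A0*B1 + A1*B0| := absmul _ _ hC0
  nlinarith [h1, h2, h3]

lemma m1bound (f : Fin 2 → Fin 2 → ℝ) (h0 : ∀ a x, 0 ≤ f a x)
    (h1 : ∀ x, ∑ a, f a x = 1) (x : Fin 2) : |∑ a, sgn a * f a x| ≤ 1 := by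
  have := h1 x
  simp only [Fin.sum_univ_two] at this ⊢
  simp only [sgn]
  norm_num
  rw [abs_le]
  constructor <;> nlinarith [h0 0 x, h0 1 x]

lemma pull3 {α : Type*} [Fintype α] (f : Fin 2 → Fin 2 → Fin 2 → α → ℝ) :
    (∑ a, ∑ b, ∑ c, ∑ l, f a b c l) = ∑ l, ∑ a, ∑ b, ∑ c, f a b c l := by
  simp [Fin.sum_univ_two, Finset.sum_add_distrib]

lemma hfact {n : ℕ} (r : Fin n → ℝ) (PA PB : Fin n → Fin 2 → Fin 2 → ℝ)
    (PCl : Fin 2 → Fin 2 → ℝ) (x y z : Fin 2) :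
    (∑ a, ∑ b, ∑ c, sgn a * sgn b * sgn c * ((∑ ν, r ν * PA ν a x * PB ν b y) * PCl c z))
    = ∑ ν, r ν * ((∑ a, sgn a * PA ν a x) * (∑ b, sgn b * PB ν b y) * (∑ c, sgn c * PCl c z)) := by
  have key : ∀ a b c : Fin 2, sgn a * sgn b * sgn c * ((∑ ν, r ν * PA ν a x * PB ν b y) * PCl c z)
      = ∑ ν, sgn a * sgn b * sgn c * (r ν * PA ν a x * PB ν b y * PCl c z) := by
    intro a b c
    rw [Finset.sum_mul, Finset.mul_sum]
  simp only [key]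
  rw [pull3]
  refine Finset.sum_congr rfl fun ν _ => ?_
  simp only [Fin.sum_univ_two]
  ring

/-- The Mermin-type steering bound for steering-LHS models in which Alice and Bob
share only Bell-local correlations. -/
theorem mermin_steering_bound
    {ι κ : Type*} [Fintype ι] [Fintype κ]
    (p : ι → ℝ) (q : κ → ℝ)
    (PAB : ι → Fin 2 → Fin 2 → Fin 2 → Fin 2 → ℝ) (PC : ι → Fin 2 → Fin 2 → ℝ)
    (QA QB : κ → Fin 2 → Fin 2 → ℝ) (QC : κ → Fin 2 → Fin 2 → ℝ)
    (P : Fin 2 → Fin 2 → Fin 2 → Fin 2 → Fin 2 → Fin 2 → ℝ)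
    (E : Fin 2 → Fin 2 → Fin 2 → ℝ)
    (hp : ∀ l, 0 ≤ p l) (hq : ∀ m, 0 ≤ q m)
    (hsum : ∑ l, p l + ∑ m, q m = 1)
    (hPAB : ∀ l, BellLocal (PAB l))
    (hPC : ∀ l c z, 0 ≤ PC l c z) (hPCsum : ∀ l z, ∑ c, PC l c z = 1)
    (hQA : ∀ m a x, 0 ≤ QA m a x) (hQAsum : ∀ m x, ∑ a, QA m a x = 1)
    (hQB : ∀ m b y, 0 ≤ QB m b y) (hQBsum : ∀ m y, ∑ b, QB m b y = 1)
    (hQC : ∀ m c z, 0 ≤ QC m c z) (hQCsum : ∀ m z, ∑ c, QC m c z = 1)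
    (hmodel : ∀ a b c x y z,
      P a b c x y z =
        ∑ l, p l * PAB l a b x y * PC l c z +
        ∑ m, q m * QA m a x * QB m b y * QC m c z)
    (hE : ∀ x y z, E x y z = ∑ a, ∑ b, ∑ c, sgn a * sgn b * sgn c * P a b c x y z) :
    E 0 0 1 - E 1 1 1 + E 0 1 0 + E 1 0 0 ≤ 2 := by
  choose n r PA PB hr hrs hPA hPAs hPB hPBs hdec using hPAB
  -- factored form of each correlator
  have swap : ∀ x y z : Fin 2, E x y z =
      (∑ l, p l * ∑ ν, r l ν * ((∑ a, sgn a * PA l ν a x) * (∑ b, sgn b * PB l ν b y) *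
          (∑ c, sgn c * PC l c z))) +
      ∑ m, q m * ((∑ a, sgn a * QA m a x) * (∑ b, sgn b * QB m b y) *
          (∑ c, sgn c * QC m c z)) := by
    intro x y z
    rw [hE]
    have expand : ∀ a b c : Fin 2, sgn a * sgn b * sgn c * P a b c x y z =
        (∑ l, sgn a * sgn b * sgn c * (p l * PAB l a b x y * PC l c z)) +
        (∑ m, sgn a * sgn b * sgn c * (q m * QA m a x * QB m b y * QC m c z)) := by
      intro a b c; rw [hmodel, mul_add, Finset.mul_sum, Finset.mul_sum]
    simp only [expand, Finset.sum_add_distrib]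
    congr 1
    · rw [pull3]
      refine Finset.sum_congr rfl fun l _ => ?_
      simp only [hdec]
      have hp' : ∀ a b c : Fin 2,
          sgn a * sgn b * sgn c * (p l * (∑ ν, r l ν * PA l ν a x * PB l ν b y) * PC l c z)
          = p l * (sgn a * sgn b * sgn c *
              ((∑ ν, r l ν * PA l ν a x * PB l ν b y) * PC l c z)) := fun a b c => by ring
      simp only [hp', ← Finset.mul_sum]
      rw [hfact]
    · rw [pull3]
      refine Finset.sum_congr rfl fun m _ => ?_
      simp only [Fin.sum_univ_two]
      ring
  rw [swap 0 0 1, swap 1 1 1, swap 0 1 0, swap 1 0 0]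
  have rearr : ∀ a b c d e f g h : ℝ,
      (a+b) - (c+d) + (e+f) + (g+h) = (a - c + e + g) + (b - d + f + h) := by
    intros; ring
  rw [rearr, ← Finset.sum_sub_distrib, ← Finset.sum_add_distrib, ← Finset.sum_add_distrib,
      ← Finset.sum_sub_distrib, ← Finset.sum_add_distrib, ← Finset.sum_add_distrib]
  have hGl : ∀ l ∈ Finset.univ (α := ι),
      p l * (∑ ν, r l ν * ((∑ a, sgn a * PA l ν a 0) * (∑ b, sgn b * PB l ν b 0) * (∑ c, sgn c * PC l c 1)))
      - p l * (∑ ν, r l ν * ((∑ a, sgn a * PA l ν a 1) * (∑ b, sgn b * PB l ν b 1) * (∑ c, sgn c * PC l c 1)))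
      + p l * (∑ ν, r l ν * ((∑ a, sgn a * PA l ν a 0) * (∑ b, sgn b * PB l ν b 1) * (∑ c, sgn c * PC l c 0)))
      + p l * (∑ ν, r l ν * ((∑ a, sgn a * PA l ν a 1) * (∑ b, sgn b * PB l ν b 0) * (∑ c, sgn c * PC l c 0)))
      ≤ p l * 2 := by
    intro l _
    rw [← mul_sub, ← mul_add, ← mul_add]
    refine mul_le_mul_of_nonneg_left ?_ (hp l)
    rw [← Finset.sum_sub_distrib, ← Finset.sum_add_distrib, ← Finset.sum_add_distrib]
    have : ∀ ν ∈ Finset.univ (α := Fin (n l)),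
        r l ν * ((∑ a, sgn a * PA l ν a 0) * (∑ b, sgn b * PB l ν b 0) * (∑ c, sgn c * PC l c 1))
        - r l ν * ((∑ a, sgn a * PA l ν a 1) * (∑ b, sgn b * PB l ν b 1) * (∑ c, sgn c * PC l c 1))
        + r l ν * ((∑ a, sgn a * PA l ν a 0) * (∑ b, sgn b * PB l ν b 1) * (∑ c, sgn c * PC l c 0))
        + r l ν * ((∑ a, sgn a * PA l ν a 1) * (∑ b, sgn b * PB l ν b 0) * (∑ c, sgn c * PC l c 0))
        ≤ r l ν * 2 := by
      intro ν _
      have hch := chsh_s13 (∑ a, sgn a * PA l ν a 0) (∑ a, sgn a * PA l ν a 1)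
        (∑ b, sgn b * PB l ν b 0) (∑ b, sgn b * PB l ν b 1)
        (∑ c, sgn c * PC l c 0) (∑ c, sgn c * PC l c 1)
        (m1bound _ (hPA l ν) (hPAs l ν) 0) (m1bound _ (hPA l ν) (hPAs l ν) 1)
        (m1bound _ (hPB l ν) (hPBs l ν) 0) (m1bound _ (hPB l ν) (hPBs l ν) 1)
        (m1bound _ (hPC l) (hPCsum l) 0) (m1bound _ (hPC l) (hPCsum l) 1)
      nlinarith [mul_le_mul_of_nonneg_left hch (hr l ν)]
    calc _ ≤ ∑ ν, r l ν * 2 := Finset.sum_le_sum this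
    _ = 2 := by rw [← Finset.sum_mul, hrs l]; ring
  have hHm : ∀ m ∈ Finset.univ (α := κ),
      q m * ((∑ a, sgn a * QA m a 0) * (∑ b, sgn b * QB m b 0) * (∑ c, sgn c * QC m c 1))
      - q m * ((∑ a, sgn a * QA m a 1) * (∑ b, sgn b * QB m b 1) * (∑ c, sgn c * QC m c 1))
      + q m * ((∑ a, sgn a * QA m a 0) * (∑ b, sgn b * QB m b 1) * (∑ c, sgn c * QC m c 0))
      + q m * ((∑ a, sgn a * QA m a 1) * (∑ b, sgn b * QB m b 0) * (∑ c, sgn c * QC m c 0))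
      ≤ q m * 2 := by
    intro m _
    have hch := chsh_s13 (∑ a, sgn a * QA m a 0) (∑ a, sgn a * QA m a 1)
      (∑ b, sgn b * QB m b 0) (∑ b, sgn b * QB m b 1)
      (∑ c, sgn c * QC m c 0) (∑ c, sgn c * QC m c 1)
      (m1bound _ (hQA m) (hQAsum m) 0) (m1bound _ (hQA m) (hQAsum m) 1)
      (m1bound _ (hQB m) (hQBsum m) 0) (m1bound _ (hQB m) (hQBsum m) 1)
      (m1bound _ (hQC m) (hQCsum m) 0) (m1bound _ (hQC m) (hQCsum m) 1)
    nlinarith [mul_le_mul_of_nonneg_left hch (hq m)]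
  calc _ ≤ (∑ l, p l * 2) + ∑ m, q m * 2 :=
        add_le_add (Finset.sum_le_sum hGl) (Finset.sum_le_sum hHm)
  _ = 2 := by rw [← Finset.sum_mul, ← Finset.sum_mul]; nlinarith [hsum]
end
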